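/- For every integer r ≥ 5, with (m₁,m₂,m₃)=(2r−8,2,1), one has ∫_{−m₂}^{m₁+2m₃} p(2m₂+2p)^{m₂}(m₁+2m₃−p)^{m₁+m₃}(m₁+2m₂+2m₃+p)^{m₁+m₃} dp > 0. -/

import Mathlib

/-- Positivity at `t = 0` of the K-stability integral for the infinite family
`SL_r/S(GL₂×GL_{r−2})`, with multiplicities `(m₁,m₂,m₃) = (2r−8, 2, 1)`: for every
integer `r ≥ 5`,
`∫_{−2}^{2r−6} p (4+2p)² (2r−6−p)^{2r−7} (2r−2+p)^{2r−7} dp > 0`. -/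
theorem kstability_integral_positive_at_zero (r : ℕ) (hr : 5 ≤ r) :
    0 < ∫ p in (-2 : ℝ)..(2 * (r : ℝ) - 6),
      p * (4 + 2 * p) ^ 2 * (2 * (r : ℝ) - 6 - p) ^ (2 * r - 7)
        * (2 * (r : ℝ) - 2 + p) ^ (2 * r - 7) := by
  obtain ⟨m, rfl⟩ : ∃ m, r = m + 5 := ⟨r - 5, by omega⟩
  have hexp : 2 * (m + 5) - 7 = 2 * m + 3 := by omega
  rw [hexp]
  push_cast
  set M : ℝ := (m : ℝ) with hM
  have hM0 : 0 ≤ M := Nat.cast_nonneg m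
  set n : ℕ := 2 * m + 3 with hn
  have hncast : (n : ℝ) = 2 * M + 3 := by rw [hn]; push_cast; ring
  rw [show (2:ℝ) * (M + 5) - 6 = 2 * M + 4 from by ring,
      show (2:ℝ) * (M + 5) - 2 = 2 * M + 8 from by ring]
  -- base function
  set B : ℝ → ℝ := fun p => (2 * M + 4 - p) * (2 * M + 8 + p) with hB
  set c : ℝ := 2 * M + 6 with hc
  -- lower bound integrand and its antiderivative
  set g : ℝ → ℝ := fun p => (2 * (p + 2) ^ 3 - 8 * (p + 2)) * B p ^ n with hg
  set F : ℝ → ℝ := fun p =>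
    B p ^ (n + 2) / ((n : ℝ) + 2) - (c ^ 2 - 4) / ((n : ℝ) + 1) * B p ^ (n + 1) with hF
  have hn1 : (0:ℝ) < (n : ℝ) + 1 := by positivity
  have hn2 : (0:ℝ) < (n : ℝ) + 2 := by positivity
  have hBderiv : ∀ x : ℝ, HasDerivAt B (-(2 * (x + 2))) x := by
    intro x
    have h1 : HasDerivAt (fun p : ℝ => 2 * M + 4 - p) (-1) x := by
      simpa using (hasDerivAt_id x).const_sub (2 * M + 4)
    have h2 : HasDerivAt (fun p : ℝ => 2 * M + 8 + p) 1 x := by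
      simpa using (hasDerivAt_id x).const_add (2 * M + 8)
    have := h1.mul h2
    refine this.congr_deriv ?_
    ring
  have hFderiv : ∀ x ∈ Set.uIcc (-2 : ℝ) (2 * M + 4), HasDerivAt F (g x) x := by
    intro x _
    have hA := ((hBderiv x).pow (n + 2)).div_const ((n : ℝ) + 2)
    have hB2 := ((hBderiv x).pow (n + 1)).const_mul ((c ^ 2 - 4) / ((n : ℝ) + 1))
    have := hA.sub hB2
    refine this.congr_deriv ?_
    have e1 : n + 2 - 1 = n + 1 := by omega
    have e2 : n + 1 - 1 = n := by omega
    rw [e1, e2, hg]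
    have hBx : B x = (2 * M + 4 - x) * (2 * M + 8 + x) := rfl
    push_cast
    field_simp
    rw [pow_succ]
    rw [hBx, hc]
    ring
  have hcontg : Continuous g := by fun_prop
  have hintg : IntervalIntegrable g MeasureTheory.volume (-2) (2 * M + 4) :=
    hcontg.intervalIntegrable _ _
  have hIg : ∫ p in (-2 : ℝ)..(2 * M + 4), g p = F (2 * M + 4) - F (-2) :=
    intervalIntegral.integral_eq_sub_of_hasDerivAt hFderiv hintg
  have hB0 : B (2 * M + 4) = 0 := by rw [hB]; ring
  have hBneg2 : B (-2) = c ^ 2 := by rw [hB, hc]; ring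
  have hIgval : ∫ p in (-2 : ℝ)..(2 * M + 4), g p
      = (c ^ 2 - 4) / ((n : ℝ) + 1) * (c ^ 2) ^ (n + 1) - (c ^ 2) ^ (n + 2) / ((n : ℝ) + 2) := by
    rw [hIg, hF]
    simp only [hB0, hBneg2]
    rw [zero_pow (by omega : n + 2 ≠ 0), zero_pow (by omega : n + 1 ≠ 0)]
    ring
  have hcpos : (0:ℝ) < c := by rw [hc]; linarith
  have hIgpos : 0 < ∫ p in (-2 : ℝ)..(2 * M + 4), g p := by
    rw [hIgval]
    have hD : (0:ℝ) < (c ^ 2) ^ (n + 1) := by positivity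
    have hfact : (c ^ 2 - 4) / ((n : ℝ) + 1) - c ^ 2 / ((n : ℝ) + 2)
        = (4 * (M + 2) ^ 2) / (((n : ℝ) + 1) * ((n : ℝ) + 2)) := by
      rw [hncast, hc]
      field_simp
      ring
    have hfactpos : 0 < (c ^ 2 - 4) / ((n : ℝ) + 1) - c ^ 2 / ((n : ℝ) + 2) := by
      rw [hfact]; positivity
    have : (c ^ 2) ^ (n + 2) = c ^ 2 * (c ^ 2) ^ (n + 1) := by rw [pow_succ]; ring
    rw [this]
    calc (0:ℝ) < ((c ^ 2 - 4) / ((n : ℝ) + 1) - c ^ 2 / ((n : ℝ) + 2)) * (c ^ 2) ^ (n + 1) :=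
          mul_pos hfactpos hD
      _ = (c ^ 2 - 4) / ((n : ℝ) + 1) * (c ^ 2) ^ (n + 1)
          - c ^ 2 * (c ^ 2) ^ (n + 1) / ((n : ℝ) + 2) := by ring
  -- compare with the original integrand
  set f : ℝ → ℝ := fun p =>
    p * (4 + 2 * p) ^ 2 * (2 * M + 4 - p) ^ n * (2 * M + 8 + p) ^ n with hf
  have hcontf : Continuous f := by fun_prop
  have hintf : IntervalIntegrable f MeasureTheory.volume (-2) (2 * M + 4) :=
    hcontf.intervalIntegrable _ _
  have hle : ∀ p ∈ Set.Icc (-2 : ℝ) (2 * M + 4), g p ≤ f p := by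
    intro p hp
    have hBp : 0 ≤ B p := by
      show 0 ≤ (2 * M + 4 - p) * (2 * M + 8 + p)
      have := hp.1; have := hp.2
      nlinarith
    have hBn : 0 ≤ B p ^ n := pow_nonneg hBp n
    have hfp : f p = p * (4 + 2 * p) ^ 2 * B p ^ n := by
      rw [hf, hB, mul_pow]; ring
    have hdiff : p * (4 + 2 * p) ^ 2 * B p ^ n - g p = 2 * (p + 2) * p ^ 2 * B p ^ n := by
      rw [hg]; ring
    have hpos : 0 ≤ 2 * (p + 2) * p ^ 2 * B p ^ n := by
      have h1 : (0:ℝ) ≤ p + 2 := by linarith [hp.1]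
      have := mul_nonneg (mul_nonneg (mul_nonneg (by norm_num : (0:ℝ) ≤ 2) h1) (sq_nonneg p)) hBn
      linarith [this]
    rw [hfp]; linarith
  have hmono : (∫ p in (-2 : ℝ)..(2 * M + 4), g p) ≤ ∫ p in (-2 : ℝ)..(2 * M + 4), f p :=
    intervalIntegral.integral_mono_on (by linarith) hintg hintf hle
  exact lt_of_lt_of_le hIgpos hmono
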